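/- arXiv:2605.09257 — 4 statements merged into one kernel-verified Lean document; each statement's English description precedes it below -/
import Mathlib

section
/- Let H and G be real Hilbert spaces, let T : H → G be a bounded linear operator with Hilbert adjoint T* : G → H, let u ∈ H, and define ℓ(h) = ⟨h, u⟩ for h ∈ H. Then the following are equivalent: (i) there exists a constant C ≥ 0 such that |ℓ(h)| ≤ C‖Th‖ for all h ∈ H; (ii) ℓ vanishes on the kernel of T and there exists q ∈ G with T*q = u. Moreover, if q ∈ G satisfies T*q = u, then |ℓ(h)| ≤ ‖q‖·‖Th‖ for all h ∈ H, and among all solutions of T*q = u there is one of minimum norm, which lies in the orthogonal complement of the kernel of T*. -/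
/-!
A bound `‖⟪u, x⟫‖ ≤ C ‖T x‖` says that `T x ↦ ⟪u, x⟫` is a well-defined bounded functional on
the range of `T`; Hahn–Banach extends it to all of `G` and the Riesz representative `q` of the
extension solves `T† q = u`. Conversely Cauchy–Schwarz gives `‖⟪u, x⟫‖ = ‖⟪q, T x⟫‖ ≤ ‖q‖ ‖T x‖`.
The solutions of `T† q = u` form a coset of `ker T†`, on which the projection onto `(ker T†)ᗮ`
is constant; that common value is the solution of minimum norm.
-/

open scoped InnerProductSpace RealInnerProductSpace

namespace LinearMap

variable {𝕜 E F : Type*} [RCLike 𝕜] [AddCommGroup E] [Module 𝕜 E]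
  [NormedAddCommGroup F] [NormedSpace 𝕜 F]

theorem exists_strongDual_comp_eq_of_norm_le (f : E →ₗ[𝕜] F) (ℓ : E →ₗ[𝕜] 𝕜) (C : ℝ)
    (hℓ : ∀ x, ‖ℓ x‖ ≤ C * ‖f x‖) : ∃ g : StrongDual 𝕜 F, ∀ x, g (f x) = ℓ x := by
  have hker : ∀ x ∈ ker f, ℓ x = 0 := fun x hx => by
    simpa [mem_ker.mp hx] using hℓ x
  obtain ⟨g₀, hg₀⟩ : ℓ ∈ range f.dualMap := by
    rw [range_dualMap_eq_dualAnnihilator_ker]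
    exact (Submodule.mem_dualAnnihilator ℓ).mpr hker
  have hg₀f : ∀ x, g₀ (f x) = ℓ x := fun x => by rw [← dualMap_apply, hg₀]
  let gRange : StrongDual 𝕜 (range f) := (g₀.domRestrict (range f)).mkContinuous C <| by
    rintro ⟨_, x, rfl⟩
    simpa [hg₀f] using hℓ x
  obtain ⟨g, hg, -⟩ := exists_extension_norm_eq (range f) gRange
  exact ⟨g, fun x => (hg ⟨f x, x, rfl⟩).trans (hg₀f x)⟩

end LinearMap

namespace ContinuousLinearMap

variable {𝕜 E F : Type*} [RCLike 𝕜] [NormedAddCommGroup E] [InnerProductSpace 𝕜 E]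
  [NormedAddCommGroup F] [InnerProductSpace 𝕜 F]

section Adjoint

variable [CompleteSpace E] [CompleteSpace F]

theorem norm_inner_le_of_adjoint_apply_eq (T : E →L[𝕜] F) {q : F} {u : E}
    (hq : adjoint T q = u) (x : E) : ‖⟪u, x⟫_𝕜‖ ≤ ‖q‖ * ‖T x‖ := by
  rw [← hq, adjoint_inner_left]
  exact norm_inner_le_norm q (T x)

theorem exists_adjoint_apply_eq_of_norm_inner_le (T : E →L[𝕜] F) (u : E) (C : ℝ)
    (hu : ∀ x, ‖⟪u, x⟫_𝕜‖ ≤ C * ‖T x‖) : ∃ q : F, adjoint T q = u := by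
  obtain ⟨g, hg⟩ := (T : E →ₗ[𝕜] F).exists_strongDual_comp_eq_of_norm_le
    (innerSL 𝕜 u : E →L[𝕜] 𝕜) C hu
  refine ⟨(InnerProductSpace.toDual 𝕜 F).symm g, ext_inner_right 𝕜 fun x => ?_⟩
  rw [adjoint_inner_left, InnerProductSpace.toDual_symm_apply]
  exact hg x

end Adjoint

variable [CompleteSpace E]

theorem apply_starProjection_orthogonal_ker (A : E →L[𝕜] F) (v : E) :
    A ((LinearMap.ker (A : E →ₗ[𝕜] F))ᗮ.starProjection v) = A v := by
  have : CompleteSpace (LinearMap.ker (A : E →ₗ[𝕜] F)) := A.isClosed_ker.completeSpace_coe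
  conv_rhs => rw [← Submodule.starProjection_add_starProjection_orthogonal
    (K := LinearMap.ker (A : E →ₗ[𝕜] F)) v]
  have hK : A ((LinearMap.ker (A : E →ₗ[𝕜] F)).starProjection v) = 0 :=
    LinearMap.mem_ker.mp (Submodule.starProjection_apply_mem _ v)
  rw [map_add, hK, zero_add]

theorem norm_starProjection_orthogonal_ker_le (A : E →L[𝕜] F) {v w : E} (hw : A w = A v) :
    ‖(LinearMap.ker (A : E →ₗ[𝕜] F))ᗮ.starProjection v‖ ≤ ‖w‖ := by
  have hsub : w - v ∈ LinearMap.ker (A : E →ₗ[𝕜] F) := by simp [hw]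
  have hproj : (LinearMap.ker (A : E →ₗ[𝕜] F))ᗮ.starProjection w =
      (LinearMap.ker (A : E →ₗ[𝕜] F))ᗮ.starProjection v := by
    rw [← sub_eq_zero, ← map_sub, Submodule.starProjection_orthogonal_apply_eq_zero hsub]
  rw [← hproj]
  exact Submodule.norm_starProjection_apply_le _ w

end ContinuousLinearMap

/-- **Riesz/adjoint-range equivalence.**
Let `H` and `G` be real Hilbert spaces, `T : H → G` a bounded linear operator with
Hilbert adjoint `T*`, `u ∈ H`, and `ℓ h = ⟪h, u⟫`.  Then:
(i) `∃ C ≥ 0, |ℓ h| ≤ C ‖T h‖` for all `h` iff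
(ii) `ℓ` vanishes on `ker T` and `∃ q, T* q = u`.
Moreover any solution `q` of `T* q = u` gives the bound `|ℓ h| ≤ ‖q‖ ‖T h‖`, and among
all solutions there is one of minimum norm lying in `(ker T*)ᗮ`. -/
theorem riesz_adjoint_range_equivalence
    {H G : Type*} [NormedAddCommGroup H] [InnerProductSpace ℝ H] [CompleteSpace H]
    [NormedAddCommGroup G] [InnerProductSpace ℝ G] [CompleteSpace G]
    (T : H →L[ℝ] G) (u : H) :
    ((∃ C : ℝ, 0 ≤ C ∧ ∀ h : H, |⟪h, u⟫| ≤ C * ‖T h‖) ↔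
      ((∀ h ∈ LinearMap.ker (T : H →ₗ[ℝ] G), ⟪h, u⟫ = (0 : ℝ)) ∧
        ∃ q : G, ContinuousLinearMap.adjoint T q = u)) ∧
    (∀ q : G, ContinuousLinearMap.adjoint T q = u →
      ∀ h : H, |⟪h, u⟫| ≤ ‖q‖ * ‖T h‖) ∧
    ((∃ q : G, ContinuousLinearMap.adjoint T q = u) →
      ∃ q₀ : G, ContinuousLinearMap.adjoint T q₀ = u ∧
        (∀ q : G, ContinuousLinearMap.adjoint T q = u → ‖q₀‖ ≤ ‖q‖) ∧
        q₀ ∈ (LinearMap.ker ((ContinuousLinearMap.adjoint T : G →L[ℝ] H) : G →ₗ[ℝ] H))ᗮ) := by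
  have hℓ : ∀ h : H, |⟪h, u⟫| = ‖⟪u, h⟫‖ := fun h => by rw [real_inner_comm, Real.norm_eq_abs]
  simp only [hℓ]
  refine ⟨⟨?_, ?_⟩, fun q hq => T.norm_inner_le_of_adjoint_apply_eq hq, ?_⟩
  · rintro ⟨C, -, hC⟩
    refine ⟨fun h (hh : T h = 0) => ?_, T.exists_adjoint_apply_eq_of_norm_inner_le u C hC⟩
    simpa [real_inner_comm, hh] using hC h
  · rintro ⟨-, q, hq⟩
    exact ⟨‖q‖, norm_nonneg q, T.norm_inner_le_of_adjoint_apply_eq hq⟩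
  · rintro ⟨q, hq⟩
    refine ⟨_, (ContinuousLinearMap.apply_starProjection_orthogonal_ker _ q).trans hq,
      fun q' hq' => ContinuousLinearMap.norm_starProjection_orthogonal_ker_le _ (hq'.trans hq.symm),
      Submodule.starProjection_apply_mem _ q⟩
end

section
/- Fix d ≥ 1 and a sample of size n consisting of vectors b_{W,i} ∈ ℝ^d and b_{Z,i} ∈ ℝ^d, indicators a_i ∈ {0,1}, and reals B_i (in the paper, B_i = 1{Y_i ≤ y}). Define the sample matrices and vectors Σ̂ = n^{-1} ∑_{i=1}^n a_i b_{Z,i} b_{W,i}ᵀ ∈ ℝ^{d×d}, γ̂ = n^{-1} ∑_{i=1}^n a_i B_i b_{Z,i} ∈ ℝ^d, and μ̂ = n^{-1} ∑_{i=1}^n b_{W,i} ∈ ℝ^d. Suppose Σ̂ is invertible and set θ̂ = Σ̂^{-1} γ̂, α̂ = (Σ̂ᵀ)^{-1} μ̂, ĥ_i = b_{W,i}ᵀ θ̂, and q̂_i = b_{Z,i}ᵀ α̂. Then the plug-in and one-step estimators coincide exactly: n^{-1} ∑_{i=1}^n [ ĥ_i + a_i q̂_i (B_i − ĥ_i) ]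 = μ̂ᵀ θ̂ = α̂ᵀ γ̂. -/
open Matrix

private lemma sum_dotProduct' {n d : ℕ} (v : Fin n → Fin d → ℝ) (w : Fin d → ℝ) :
    (∑ i, v i) ⬝ᵥ w = ∑ i, v i ⬝ᵥ w := by
  simp only [dotProduct, Finset.sum_apply, Finset.sum_mul]
  rw [Finset.sum_comm]

private lemma dotProduct_sum' {n d : ℕ} (w : Fin d → ℝ) (v : Fin n → Fin d → ℝ) :
    w ⬝ᵥ (∑ i, v i) = ∑ i, w ⬝ᵥ v i := by
  simp only [dotProduct, Finset.sum_apply, Finset.mul_sum]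
  rw [Finset.sum_comm]

private lemma sum_mulVec' {n d : ℕ} (M : Fin n → Matrix (Fin d) (Fin d) ℝ) (w : Fin d → ℝ) :
    (∑ i, M i) *ᵥ w = ∑ i, (M i) *ᵥ w := by
  ext j
  simp only [Matrix.mulVec, dotProduct, Matrix.sum_apply, Finset.sum_apply, Finset.sum_mul]
  rw [Finset.sum_comm]

private lemma vecMulVec_mulVec' {d : ℕ} (u v w : Fin d → ℝ) :
    (Matrix.vecMulVec u v) *ᵥ w = (v ⬝ᵥ w) • u := by
  ext j
  simp only [Matrix.mulVec, dotProduct, Matrix.vecMulVec_apply, Pi.smul_apply,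
    smul_eq_mul, Finset.mul_sum]
  rw [Finset.sum_mul]
  exact Finset.sum_congr rfl fun k _ => by ring

/-- **Exact finite-rank plug-in and one-step equivalence.**
With sample matrices `Σ̂ = n⁻¹ ∑ aᵢ b_{Z,i} b_{W,i}ᵀ`, `γ̂ = n⁻¹ ∑ aᵢ Bᵢ b_{Z,i}`,
`μ̂ = n⁻¹ ∑ b_{W,i}`, and with `Σ̂` invertible, the closed-form plug-in estimator and the
one-step estimator built from `θ̂ = Σ̂⁻¹ γ̂`, `α̂ = Σ̂⁻ᵀ μ̂` coincide exactly:
`n⁻¹ ∑ᵢ [ĥᵢ + aᵢ q̂ᵢ (Bᵢ − ĥᵢ)] = μ̂ᵀ θ̂ = α̂ᵀ γ̂`. -/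
theorem plugin_one_step_equivalence
    (d n : ℕ) (hd : 1 ≤ d) (hn : 1 ≤ n)
    (bW bZ : Fin n → Fin d → ℝ) (a : Fin n → ℝ) (ha : ∀ i, a i = 0 ∨ a i = 1)
    (B : Fin n → ℝ)
    (Shat : Matrix (Fin d) (Fin d) ℝ)
    (hS : Shat = (n : ℝ)⁻¹ • ∑ i, a i • Matrix.vecMulVec (bZ i) (bW i))
    (γhat μhat : Fin d → ℝ)
    (hγ : γhat = (n : ℝ)⁻¹ • ∑ i, (a i * B i) • bZ i)
    (hμ : μhat = (n : ℝ)⁻¹ • ∑ i, bW i)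
    (hinv : IsUnit Shat)
    (θhat αhat : Fin d → ℝ)
    (hθ : θhat = (Shat⁻¹).mulVec γhat)
    (hα : αhat = (Shatᵀ)⁻¹.mulVec μhat) :
    (n : ℝ)⁻¹ * ∑ i, (bW i ⬝ᵥ θhat + a i * (bZ i ⬝ᵥ αhat) * (B i - bW i ⬝ᵥ θhat))
        = μhat ⬝ᵥ θhat ∧
    μhat ⬝ᵥ θhat = αhat ⬝ᵥ γhat := by

  have hdet : IsUnit Shat.det := (Matrix.isUnit_iff_isUnit_det _).mp hinv
  have hSθ : Shat.mulVec θhat = γhat := by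
    rw [hθ, Matrix.mulVec_mulVec, Matrix.mul_nonsing_inv _ hdet, Matrix.one_mulVec]
  have hSα : Shatᵀ.mulVec αhat = μhat := by
    rw [hα, Matrix.mulVec_mulVec, Matrix.mul_nonsing_inv _ (by rwa [Matrix.det_transpose]),
      Matrix.one_mulVec]
  have key : μhat ⬝ᵥ θhat = αhat ⬝ᵥ γhat := by
    rw [← hSθ, ← hSα, Matrix.mulVec_transpose, ← Matrix.dotProduct_mulVec]
  refine ⟨?_, key⟩
  have h1 : μhat ⬝ᵥ θhat = (n : ℝ)⁻¹ * ∑ i, bW i ⬝ᵥ θhat := by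
    rw [hμ, smul_dotProduct, sum_dotProduct', smul_eq_mul]
  have h2 : αhat ⬝ᵥ γhat = (n : ℝ)⁻¹ * ∑ i, a i * B i * (bZ i ⬝ᵥ αhat) := by
    rw [hγ, dotProduct_smul, dotProduct_sum', smul_eq_mul]
    congr 1
    refine Finset.sum_congr rfl fun i _ => ?_
    rw [dotProduct_smul, smul_eq_mul, dotProduct_comm]
  have h3 : αhat ⬝ᵥ γhat = (n : ℝ)⁻¹ * ∑ i, a i * (bZ i ⬝ᵥ αhat) * (bW i ⬝ᵥ θhat) := by
    rw [← hSθ, hS, Matrix.smul_mulVec, dotProduct_smul, sum_mulVec',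
      dotProduct_sum', smul_eq_mul]
    congr 1
    refine Finset.sum_congr rfl fun i _ => ?_
    rw [Matrix.smul_mulVec, vecMulVec_mulVec', dotProduct_smul,
      dotProduct_smul, smul_eq_mul, smul_eq_mul, dotProduct_comm αhat (bZ i)]
    ring
  have expand : ∑ i, (bW i ⬝ᵥ θhat + a i * (bZ i ⬝ᵥ αhat) * (B i - bW i ⬝ᵥ θhat))
      = (∑ i, bW i ⬝ᵥ θhat) + ((∑ i, a i * B i * (bZ i ⬝ᵥ αhat))
        - ∑ i, a i * (bZ i ⬝ᵥ αhat) * (bW i ⬝ᵥ θhat)) := by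
    rw [← Finset.sum_sub_distrib, ← Finset.sum_add_distrib]
    exact Finset.sum_congr rfl fun i _ => by ring
  rw [expand, mul_add, mul_sub, ← h1, ← h2, ← h3, key]
  ring
end

section
/- Let Y be a real-valued random variable on a probability space such that (t − Y)₊ is integrable for every t ∈ ℝ, let F(t) = P(Y ≤ t) be its CDF, let S(t) = E[(t − Y)₊] be the expected shortfall, and fix τ ∈ (0,1). If q ∈ ℝ satisfies F(q) = τ, then q maximizes the Rockafellar–Uryasev criterion: for every t ∈ ℝ, t − τ^{-1} S(t) ≤ q − τ^{-1} S(q). -/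
open MeasureTheory

/-!
For each outcome `y`, the convex map `s ↦ (s - y)₊` has subgradient `𝟙{y ≤ q}` at `q`.
Integrating the subgradient inequality gives `S t ≥ S q + (t - q) F(q) = S q + (t - q) τ`,
which after division by `τ > 0` is exactly the optimality of `q`.
-/

lemma max_sub_zero_add_indicator_Iic_le (y q t : ℝ) :
    max (q - y) 0 + (Set.Iic q).indicator (fun _ => t - q) y ≤ max (t - y) 0 := by
  by_cases hy : y ≤ q
  · rw [Set.indicator_of_mem (Set.mem_Iic.2 hy), max_eq_left (sub_nonneg.2 hy)]
    linarith [le_max_left (t - y) 0]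
  · rw [Set.indicator_of_notMem (fun h => hy (Set.mem_Iic.1 h)),
      max_eq_right (by linarith [not_le.1 hy])]
    simp

lemma integral_max_sub_zero_add_mul_measureReal_le {Ω : Type*} [MeasurableSpace Ω]
    (μ : Measure Ω) [IsFiniteMeasure μ] {Y : Ω → ℝ} (hY : Measurable Y) {q t : ℝ}
    (hq : Integrable (fun ω => max (q - Y ω) 0) μ)
    (ht : Integrable (fun ω => max (t - Y ω) 0) μ) :
    ∫ ω, max (q - Y ω) 0 ∂μ + (t - q) * μ.real {ω | Y ω ≤ q} ≤
      ∫ ω, max (t - Y ω) 0 ∂μ := by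
  have hA : MeasurableSet {ω | Y ω ≤ q} := hY measurableSet_Iic
  have hind : Integrable ({ω | Y ω ≤ q}.indicator fun _ => t - q) μ :=
    (integrable_const (t - q)).indicator hA
  calc ∫ ω, max (q - Y ω) 0 ∂μ + (t - q) * μ.real {ω | Y ω ≤ q}
      = ∫ ω, (max (q - Y ω) 0 + {ω | Y ω ≤ q}.indicator (fun _ => t - q) ω) ∂μ := by
        rw [integral_add hq hind, integral_indicator_const _ hA, smul_eq_mul, mul_comm]
    _ ≤ ∫ ω, max (t - Y ω) 0 ∂μ :=
        integral_mono (hq.add hind) ht fun ω =>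
          max_sub_zero_add_indicator_Iic_le (Y ω) q t

/-- **Rockafellar–Uryasev optimality of the quantile.**
Let `Y` be a real random variable with integrable shortfall `(t − Y)₊` for every `t`,
CDF `F t = P(Y ≤ t)`, and shortfall `S t = E[(t − Y)₊]`.  If `F q = τ ∈ (0,1)`, then `q`
maximizes `t ↦ t − τ⁻¹ S t`. -/
theorem rockafellar_uryasev_optimality
    {Ω : Type*} [MeasurableSpace Ω] (P : Measure Ω) [IsProbabilityMeasure P]
    (Y : Ω → ℝ) (hY : Measurable Y)
    (hint : ∀ t : ℝ, Integrable (fun ω => max (t - Y ω) 0) P)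
    (τ : ℝ) (hτ : τ ∈ Set.Ioo (0 : ℝ) 1)
    (q : ℝ) (hq : (P {ω | Y ω ≤ q}).toReal = τ) :
    ∀ t : ℝ,
      t - τ⁻¹ * ∫ ω, max (t - Y ω) 0 ∂P ≤ q - τ⁻¹ * ∫ ω, max (q - Y ω) 0 ∂P := by
  intro t
  have hτ0 : 0 < τ := hτ.1
  have hsub := integral_max_sub_zero_add_mul_measureReal_le P hY (hint q) (hint t)
  rw [measureReal_def, hq] at hsub
  calc t - τ⁻¹ * ∫ ω, max (t - Y ω) 0 ∂P
      ≤ t - τ⁻¹ * (∫ ω, max (q - Y ω) 0 ∂P + (t - q) * τ) := by gcongr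
    _ = q - τ⁻¹ * ∫ ω, max (q - Y ω) 0 ∂P := by field_simp; ring
end

section
/- Let Y be a real-valued random variable on a probability space with CDF F(s) = P(Y ≤ s), and define the quantile function Q(u) = inf{ y ∈ ℝ : F(y) ≥ u } for u ∈ (0,1). Fix τ ∈ (0,1) and q ∈ ℝ with F(q) = τ, and assume (q − Y)₊ is integrable. Then u ↦ Q(u) is Lebesgue integrable on (0, τ] and ∫_{0}^{τ} Q(u) du = τ q − E[(q − Y)₊]; equivalently, the lower-tail conditional value at risk C(τ) = τ^{-1} ∫_0^τ Q(u) du satisfies the shortfall representation C(τ) = q − τ^{-1} E[(q − Y)₊]. -/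
open MeasureTheory

/-!
Under Lebesgue measure on `(0, 1)` the quantile function `Q` has law `μ`, the law of `Y`, because
`Q u ≤ s ↔ u ≤ F s` for `u ∈ (0, 1)`. The same equivalence at `s = q` shows that `q - Q u ≥ 0`
exactly for `u ≤ τ`, so `∫_0^τ (q - Q u) du = ∫_0^1 (q - Q u)₊ du = E[(q - Y)₊]`.
-/

open Set

lemma Real.volume_Ioo_inter_Iic {a b x : ℝ} (hx : x ≤ b) :
    volume (Ioo a b ∩ Iic x) = ENNReal.ofReal (x - a) := by
  refine le_antisymm ?_ ?_
  · calc volume (Ioo a b ∩ Iic x) ≤ volume (Icc a x) := measure_mono fun u hu => ⟨hu.1.1.le, hu.2⟩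
      _ = ENNReal.ofReal (x - a) := Real.volume_Icc
  · calc ENNReal.ofReal (x - a) = volume (Ioo a x) := Real.volume_Ioo.symm
      _ ≤ volume (Ioo a b ∩ Iic x) := measure_mono fun u hu => ⟨⟨hu.1, hu.2.trans_le hx⟩, hu.2.le⟩

namespace ProbabilityTheory

/-- Meaningful for `u ∈ (0, 1)`: for `u ≤ 0` the set is unbounded below and for `u > 1` it is
empty, so `sInf` returns the junk value `0`. -/
noncomputable def quantile (μ : Measure ℝ) (u : ℝ) : ℝ := sInf {y : ℝ | u ≤ cdf μ y}

variable {μ : Measure ℝ}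

lemma bddBelow_setOf_le_cdf {u : ℝ} (hu : 0 < u) : BddBelow {y : ℝ | u ≤ cdf μ y} := by
  obtain ⟨y₀, hy₀⟩ := ((tendsto_cdf_atBot μ).eventually_lt_const hu).exists
  exact ⟨y₀, fun y hy => le_of_not_gt fun hlt => (hy.trans (monotone_cdf μ hlt.le)).not_gt hy₀⟩

lemma nonempty_setOf_le_cdf {u : ℝ} (hu : u < 1) : {y : ℝ | u ≤ cdf μ y}.Nonempty :=
  ((tendsto_cdf_atTop μ).eventually_const_le hu).exists

lemma quantile_le_iff {u : ℝ} (hu : u ∈ Ioo 0 1) (s : ℝ) :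
    quantile μ u ≤ s ↔ u ≤ cdf μ s := by
  refine ⟨fun h => ?_, fun h => csInf_le (bddBelow_setOf_le_cdf hu.1) h⟩
  have hright : ∀ y ∈ Ioi s, u ≤ cdf μ y := fun y hy => by
    obtain ⟨z, hz, hzy⟩ := exists_lt_of_csInf_lt (nonempty_setOf_le_cdf hu.2) (h.trans_lt hy)
    exact hz.trans (monotone_cdf μ hzy.le)
  exact ge_of_tendsto
    ((cdf μ).right_continuous s |>.mono_left (nhdsWithin_mono s Ioi_subset_Ici_self))
    (eventually_nhdsWithin_of_forall hright)

lemma le_cdf_quantile {u : ℝ} (hu : u ∈ Ioo 0 1) : u ≤ cdf μ (quantile μ u) :=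
  (quantile_le_iff hu _).1 le_rfl

lemma monotoneOn_quantile : MonotoneOn (quantile μ) (Ioo 0 1) := fun _ hu _ hv huv =>
  (quantile_le_iff hu _).2 (huv.trans (le_cdf_quantile hv))

lemma aemeasurable_quantile : AEMeasurable (quantile μ) (volume.restrict (Ioo 0 1)) :=
  aemeasurable_restrict_of_monotoneOn measurableSet_Ioo monotoneOn_quantile

theorem map_quantile_volume [IsProbabilityMeasure μ] :
    (volume.restrict (Ioo 0 1)).map (quantile μ) = μ := by
  refine (Measure.ext_of_Iic μ _ fun s => ?_).symm
  have hpre : quantile μ ⁻¹' Iic s ∩ Ioo 0 1 = Ioo 0 1 ∩ Iic (cdf μ s) := by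
    ext u
    simp only [mem_inter_iff, mem_preimage, mem_Iic]
    exact ⟨fun ⟨h, hu⟩ => ⟨hu, (quantile_le_iff hu s).1 h⟩,
      fun ⟨hu, h⟩ => ⟨(quantile_le_iff hu s).2 h, hu⟩⟩
  rw [Measure.map_apply_of_aemeasurable aemeasurable_quantile measurableSet_Iic,
    Measure.restrict_apply' measurableSet_Ioo, hpre,
    Real.volume_Ioo_inter_Iic (cdf_le_one μ s), sub_zero, ofReal_cdf]

section Transfer

variable [IsProbabilityMeasure μ] {E : Type*} [NormedAddCommGroup E]

theorem integrableOn_comp_quantile_iff {g : ℝ → E} (hg : AEStronglyMeasurable g μ) :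
    IntegrableOn (fun u => g (quantile μ u)) (Ioo 0 1) ↔ Integrable g μ := by
  rw [← map_quantile_volume (μ := μ)] at hg
  conv_rhs => rw [← map_quantile_volume (μ := μ)]
  exact (integrable_map_measure hg aemeasurable_quantile).symm

theorem integral_comp_quantile [NormedSpace ℝ E] {g : ℝ → E} (hg : AEStronglyMeasurable g μ) :
    ∫ u in Ioo 0 1, g (quantile μ u) = ∫ y, g y ∂μ := by
  rw [← map_quantile_volume (μ := μ)] at hg
  conv_rhs => rw [← map_quantile_volume (μ := μ)]
  exact (integral_map aemeasurable_quantile hg).symm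

end Transfer

section Shortfall

variable {q : ℝ}

lemma max_sub_quantile_eqOn (hq : cdf μ q < 1) :
    EqOn (fun u => max (q - quantile μ u) 0) (fun u => q - quantile μ u) (Ioc 0 (cdf μ q)) :=
  fun _ hu => max_eq_left <| sub_nonneg.2 <|
    (quantile_le_iff ⟨hu.1, hu.2.trans_lt hq⟩ q).2 hu.2

lemma max_sub_quantile_eq_zero {u : ℝ} (hu : u ∈ Ioo 0 1) (hqu : cdf μ q < u) :
    max (q - quantile μ u) 0 = 0 :=
  max_eq_right <| sub_nonpos.2 <| (not_le.1 fun h => hqu.not_ge ((quantile_le_iff hu q).1 h)).le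

lemma integrableOn_quantile_Ioc_cdf [IsProbabilityMeasure μ] (hq : cdf μ q < 1)
    (hint : Integrable (fun y => max (q - y) 0) μ) :
    IntegrableOn (quantile μ) (Ioc 0 (cdf μ q)) := by
  have hsub : Ioc 0 (cdf μ q) ⊆ Ioo 0 1 := fun u hu => ⟨hu.1, hu.2.trans_lt hq⟩
  have hshortfall : IntegrableOn (fun u => q - quantile μ u) (Ioc 0 (cdf μ q)) :=
    (((integrableOn_comp_quantile_iff (by fun_prop)).2 hint).mono_set hsub).congr_fun
      (max_sub_quantile_eqOn hq) measurableSet_Ioc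
  exact ((integrableOn_const (C := q) measure_Ioc_lt_top.ne).sub hshortfall).congr_fun
    (fun u _ => sub_sub_cancel q _) measurableSet_Ioc

lemma integral_sub_quantile_Ioc_cdf [IsProbabilityMeasure μ] (hq : cdf μ q < 1) :
    ∫ u in Ioc 0 (cdf μ q), (q - quantile μ u) = ∫ y, max (q - y) 0 ∂μ := calc
  _ = ∫ u in Ioc 0 (cdf μ q), max (q - quantile μ u) 0 :=
    (setIntegral_congr_fun measurableSet_Ioc (max_sub_quantile_eqOn hq)).symm
  _ = ∫ u in Ioo 0 1, max (q - quantile μ u) 0 :=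
    (setIntegral_eq_of_subset_of_forall_sdiff_eq_zero measurableSet_Ioo
      (fun u hu => ⟨hu.1, hu.2.trans_lt hq⟩)
      fun u ⟨hu, hnot⟩ => max_sub_quantile_eq_zero hu (not_le.1 fun h => hnot ⟨hu.1, h⟩)).symm
  _ = ∫ y, max (q - y) 0 ∂μ := integral_comp_quantile (g := fun y => max (q - y) 0) (by fun_prop)

end Shortfall

lemma cdf_map_eq_toReal {Ω : Type*} [MeasurableSpace Ω] (P : Measure Ω) [IsProbabilityMeasure P]
    {Y : Ω → ℝ} (hY : Measurable Y) (s : ℝ) :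
    cdf (P.map Y) s = (P {ω | Y ω ≤ s}).toReal := by
  have := Measure.isProbabilityMeasure_map (μ := P) hY.aemeasurable
  rw [cdf_eq_real, measureReal_def, Measure.map_apply hY measurableSet_Iic]
  rfl

end ProbabilityTheory

open ProbabilityTheory

/-- **Shortfall representation of lower-tail CVaR.**
Let `Y` have CDF `F s = P(Y ≤ s)` and quantile function `Q u = inf {y : F y ≥ u}`.
Fix `τ ∈ (0,1)` and `q` with `F q = τ`, and suppose `(q − Y)₊` is integrable.  Then `Q` is
Lebesgue integrable on `(0, τ]`, `∫_0^τ Q(u) du = τ q − E[(q − Y)₊]`, and hence the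
lower-tail CVaR `C(τ) = τ⁻¹ ∫_0^τ Q(u) du` equals `q − τ⁻¹ E[(q − Y)₊]`. -/
theorem cvar_shortfall_representation
    {Ω : Type*} [MeasurableSpace Ω] (P : Measure Ω) [IsProbabilityMeasure P]
    (Y : Ω → ℝ) (hY : Measurable Y)
    (τ : ℝ) (hτ : τ ∈ Set.Ioo (0 : ℝ) 1)
    (q : ℝ) (hq : (P {ω | Y ω ≤ q}).toReal = τ)
    (hint : Integrable (fun ω => max (q - Y ω) 0) P) :
    IntegrableOn (fun u : ℝ => sInf {y : ℝ | u ≤ (P {ω | Y ω ≤ y}).toReal})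
        (Set.Ioc 0 τ) ∧
    (∫ u in Set.Ioc 0 τ, sInf {y : ℝ | u ≤ (P {ω | Y ω ≤ y}).toReal})
        = τ * q - ∫ ω, max (q - Y ω) 0 ∂P ∧
    τ⁻¹ * ∫ u in Set.Ioc 0 τ, sInf {y : ℝ | u ≤ (P {ω | Y ω ≤ y}).toReal}
        = q - τ⁻¹ * ∫ ω, max (q - Y ω) 0 ∂P := by
  have := Measure.isProbabilityMeasure_map (μ := P) hY.aemeasurable
  have hg : AEStronglyMeasurable (fun y => max (q - y) 0) (P.map Y) := by fun_prop
  simp only [← cdf_map_eq_toReal P hY] at hq ⊢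
  subst hq
  change IntegrableOn (quantile (P.map Y)) _ ∧ ∫ u in _, quantile (P.map Y) u = _ ∧
    _ * ∫ u in _, quantile (P.map Y) u = _
  have hQ : IntegrableOn (quantile (P.map Y)) (Ioc 0 (cdf (P.map Y) q)) :=
    integrableOn_quantile_Ioc_cdf hτ.2 ((integrable_map_measure hg hY.aemeasurable).2 hint)
  have hshortfall := integral_sub_quantile_Ioc_cdf hτ.2 (μ := P.map Y)
  rw [integral_sub (integrableOn_const (C := q) measure_Ioc_lt_top.ne) hQ, setIntegral_const,
    Real.volume_real_Ioc_of_le hτ.1.le, sub_zero, smul_eq_mul,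
    integral_map hY.aemeasurable hg] at hshortfall
  have hmain : ∫ u in Ioc 0 (cdf (P.map Y) q), quantile (P.map Y) u
      = cdf (P.map Y) q * q - ∫ ω, max (q - Y ω) 0 ∂P := by linarith
  refine ⟨hQ, hmain, ?_⟩
  rw [hmain, mul_sub, ← mul_assoc, inv_mul_cancel₀ hτ.1.ne', one_mul]
end
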